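/- Let U_V(t) ∈ ℝ^{n×r}, S_V(t) ∈ ℝ^{r×r}, V_V(t) ∈ ℝ^{m×r} be differentiable with U_VᵀU_V = I, V_VᵀV_V = I, and S_V invertible for all t. Suppose they satisfy the system U̇_V = −(I − U_V U_Vᵀ) G V_V S_V^{-1}, V̇_V = −(I − V_V V_Vᵀ) Gᵀ U_V S_V^{-T}, Ṡ_V = −γ S_V − U_Vᵀ G V_V, where G = G(t) ∈ ℝ^{n×m} and γ ∈ ℝ. Then V := U_V S_V V_Vᵀ satisfies V̇ = −γ V − P(V)G, where P(V)Z = U_V U_Vᵀ Z (I − V_V V_Vᵀ) + Z V_V V_Vᵀ. -/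

import Mathlib

/-!
By the product rule, `d/dt (U S Vᵀ) = U̇ S Vᵀ + U Ṡ Vᵀ + U S V̇ᵀ`. The factors `S⁻¹` and `S⁻ᵀ` in
the equations for `U̇` and `V̇` cancel against the neighbouring `S`, leaving
`-(1 - U Uᵀ) G V Vᵀ`, `-γ U S Vᵀ - U Uᵀ G V Vᵀ` and `-U Uᵀ G (1 - V Vᵀ)`, whose sum is
`-γ U S Vᵀ - P(V) G`.
-/

open Matrix

attribute [local instance] Matrix.frobeniusNormedAddCommGroup Matrix.frobeniusNormedSpace

section Calculus

variable {𝕜 : Type*} [NontriviallyNormedField 𝕜] [CompleteSpace 𝕜]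
  {l m n : Type*} [Fintype l] [Fintype m] [Fintype n] {t : 𝕜}

theorem HasDerivAt.matrix_mul {A : 𝕜 → Matrix l m 𝕜} {B : 𝕜 → Matrix m n 𝕜}
    {A' : Matrix l m 𝕜} {B' : Matrix m n 𝕜} (hA : HasDerivAt A A' t) (hB : HasDerivAt B B' t) :
    HasDerivAt (fun s => A s * B s) (A' * B t + A t * B') t := by
  let mulCLM : Matrix l m 𝕜 →L[𝕜] Matrix m n 𝕜 →L[𝕜] Matrix l n 𝕜 :=
    LinearMap.toContinuousLinearMap (LinearMap.toContinuousLinearMap.toLinearMap ∘ₗ mulLinearMap 𝕜)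
  rw [add_comm]
  exact mulCLM.hasDerivAt_of_bilinear (fun _ => hA) (fun _ => hB)

theorem HasDerivAt.matrix_transpose {A : 𝕜 → Matrix m n 𝕜} {A' : Matrix m n 𝕜}
    (hA : HasDerivAt A A' t) : HasDerivAt (fun s => (A s)ᵀ) A'ᵀ t :=
  (LinearMap.toContinuousLinearMap (transposeLinearEquiv m n 𝕜 𝕜).toLinearMap).hasFDerivAt
    |>.comp_hasDerivAt t hA

end Calculus

section Algebra

variable {R : Type*} [CommRing R] {n m r : Type*} [Fintype n] [Fintype m] [Fintype r]
  [DecidableEq n] [DecidableEq m] [DecidableEq r]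

/-- The projection `P(V)` onto the tangent space at `V = U S Vᵀ` of the manifold of rank-`r`
matrices. -/
def tangentProjection (U : Matrix n r R) (V : Matrix m r R) (Z : Matrix n m R) : Matrix n m R :=
  U * Uᵀ * Z * (1 - V * Vᵀ) + Z * (V * Vᵀ)

theorem lowRankFlow_productRule_eq (U : Matrix n r R) (S : Matrix r r R) (V : Matrix m r R)
    (G : Matrix n m R) (γ : R) (hS : IsUnit S.det) :
    (-((1 - U * Uᵀ) * G * V * S⁻¹) * S + U * (-(γ • S) - Uᵀ * G * V)) * Vᵀ +
        U * S * (-((1 - V * Vᵀ) * Gᵀ * U * S⁻¹ᵀ))ᵀ =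
      -(γ • (U * S * Vᵀ)) - tangentProjection U V G := by
  rw [Matrix.neg_mul, nonsing_inv_mul_cancel_right (A := S) _ hS, transpose_neg, transpose_mul,
    transpose_transpose, Matrix.mul_neg, Matrix.mul_assoc U S,
    mul_nonsing_inv_cancel_left (A := S) _ hS]
  simp only [tangentProjection, transpose_mul, transpose_sub, transpose_transpose,
    Matrix.sub_mul, Matrix.mul_sub, Matrix.add_mul, Matrix.mul_neg, Matrix.neg_mul,
    Matrix.mul_one, Matrix.one_mul, Matrix.mul_smul, Matrix.smul_mul, Matrix.mul_assoc]
  abel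

end Algebra

theorem lowrank_momentum_flow_general {n m r : ℕ}
    (UV : ℝ → Matrix (Fin n) (Fin r) ℝ)
    (SV : ℝ → Matrix (Fin r) (Fin r) ℝ)
    (VV : ℝ → Matrix (Fin m) (Fin r) ℝ)
    (G : ℝ → Matrix (Fin n) (Fin m) ℝ) (γ : ℝ)
    (hSinv : ∀ t, IsUnit (SV t).det)
    (hU : ∀ t, HasDerivAt UV (-((1 - UV t * (UV t)ᵀ) * G t * VV t * (SV t)⁻¹)) t)
    (hV : ∀ t, HasDerivAt VV (-((1 - VV t * (VV t)ᵀ) * (G t)ᵀ * UV t * ((SV t)⁻¹)ᵀ)) t)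
    (hS : ∀ t, HasDerivAt SV (-(γ • SV t) - (UV t)ᵀ * G t * VV t) t) :
    ∀ t, HasDerivAt (fun s => UV s * SV s * (VV s)ᵀ)
      (-(γ • (UV t * SV t * (VV t)ᵀ)) -
        (UV t * (UV t)ᵀ * G t * (1 - VV t * (VV t)ᵀ) + G t * (VV t * (VV t)ᵀ))) t := by
  intro t
  have h := ((hU t).matrix_mul (hS t)).matrix_mul (hV t).matrix_transpose
  rwa [lowRankFlow_productRule_eq _ _ _ _ _ (hSinv t)] at h

/-- If the factors `U_V, S_V, V_V` satisfy the dynamical low-rank system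
`U̇_V = −(I − U_V U_Vᵀ) G V_V S_V⁻¹`, `V̇_V = −(I − V_V V_Vᵀ) Gᵀ U_V S_V⁻ᵀ`,
`Ṡ_V = −γ S_V − U_Vᵀ G V_V`, with orthonormal `U_V, V_V` and invertible `S_V`, then
`V = U_V S_V V_Vᵀ` satisfies `V̇ = −γ V − P(V) G`, where
`P(V)Z = U_V U_Vᵀ Z (I − V_V V_Vᵀ) + Z V_V V_Vᵀ`. -/
theorem lowrank_momentum_flow {n m r : ℕ}
    (UV : ℝ → Matrix (Fin n) (Fin r) ℝ)
    (SV : ℝ → Matrix (Fin r) (Fin r) ℝ)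
    (VV : ℝ → Matrix (Fin m) (Fin r) ℝ)
    (G : ℝ → Matrix (Fin n) (Fin m) ℝ) (γ : ℝ)
    (hUorth : ∀ t, (UV t)ᵀ * UV t = 1)
    (hVorth : ∀ t, (VV t)ᵀ * VV t = 1)
    (hSinv : ∀ t, IsUnit (SV t).det)
    (hU : ∀ t, HasDerivAt UV (-((1 - UV t * (UV t)ᵀ) * G t * VV t * (SV t)⁻¹)) t)
    (hV : ∀ t, HasDerivAt VV (-((1 - VV t * (VV t)ᵀ) * (G t)ᵀ * UV t * ((SV t)⁻¹)ᵀ)) t)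
    (hS : ∀ t, HasDerivAt SV (-(γ • SV t) - (UV t)ᵀ * G t * VV t) t) :
    ∀ t, HasDerivAt (fun s => UV s * SV s * (VV s)ᵀ)
      (-(γ • (UV t * SV t * (VV t)ᵀ)) -
        (UV t * (UV t)ᵀ * G t * (1 - VV t * (VV t)ᵀ) + G t * (VV t * (VV t)ᵀ))) t :=
  lowrank_momentum_flow_general UV SV VV G γ hSinv hU hV hS
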